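/- arXiv:1809.05566 — 3 statements merged into one kernel-verified Lean document; each statement's English description precedes it below -/
import Mathlib

section
/- Let X and Y be metric spaces. Then the hyperbolicity constants satisfy |hyp(X) - hyp(Y)| ≤ 4 · d_GH(X,Y), where d_GH denotes the Gromov-Hausdorff distance. -/
open scoped ENNReal

/-- A correspondence between `X` and `Y`. -/
def IsCorrespondence {X Y : Type*} (R : Set (X × Y)) : Prop :=
  (∀ x : X, ∃ y : Y, (x, y) ∈ R) ∧ (∀ y : Y, ∃ x : X, (x, y) ∈ R)

/-- Distortion of a correspondence. -/
noncomputable def corrDis {X Y : Type*} [MetricSpace X] [MetricSpace Y]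
    (R : Set (X × Y)) : ℝ≥0∞ :=
  ⨆ a ∈ R, ⨆ b ∈ R,
    max (edist a.1 b.1 - edist a.2 b.2) (edist a.2 b.2 - edist a.1 b.1)

/-- Gromov–Hausdorff distance: half the infimal distortion over correspondences. -/
noncomputable def ghDist (X Y : Type*) [MetricSpace X] [MetricSpace Y] : ℝ≥0∞ :=
  2⁻¹ * ⨅ R ∈ {R : Set (X × Y) | IsCorrespondence R}, corrDis R

/-- Hyperbolicity constant: infimal `δ ≥ 0` satisfying the four-point condition. -/
noncomputable def hypConst (X : Type*) [MetricSpace X] : ℝ≥0∞ :=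
  ⨅ δ ∈ {δ : ℝ≥0∞ | ∀ x y w z : X,
    edist x y + edist w z ≤ max (edist x w + edist y z) (edist x z + edist y w) + 2 * δ}, δ

lemma corrDis_term_le {X Y : Type*} [MetricSpace X] [MetricSpace Y] {R : Set (X × Y)}
    {a b : X × Y} (ha : a ∈ R) (hb : b ∈ R) :
    max (edist a.1 b.1 - edist a.2 b.2) (edist a.2 b.2 - edist a.1 b.1) ≤ corrDis R := by
  refine le_trans ?_ (le_iSup₂ (f := fun a' (_ : a' ∈ R) => ⨆ b' ∈ R,
    max (edist a'.1 b'.1 - edist a'.2 b'.2) (edist a'.2 b'.2 - edist a'.1 b'.1)) a ha)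
  exact le_iSup₂ (f := fun b' (_ : b' ∈ R) =>
    max (edist a.1 b'.1 - edist a.2 b'.2) (edist a.2 b'.2 - edist a.1 b'.1)) b hb

lemma corrDis_bound {X Y : Type*} [MetricSpace X] [MetricSpace Y] {R : Set (X × Y)}
    {a b : X × Y} (ha : a ∈ R) (hb : b ∈ R) :
    edist a.1 b.1 ≤ edist a.2 b.2 + corrDis R ∧
    edist a.2 b.2 ≤ edist a.1 b.1 + corrDis R := by
  have h := corrDis_term_le ha hb
  have h1 := (le_max_left (edist a.1 b.1 - edist a.2 b.2) (edist a.2 b.2 - edist a.1 b.1)).trans h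
  have h2 := (le_max_right (edist a.1 b.1 - edist a.2 b.2) (edist a.2 b.2 - edist a.1 b.1)).trans h
  exact ⟨tsub_le_iff_left.mp h1, tsub_le_iff_left.mp h2⟩

lemma hypConst_le_corr {X Y : Type*} [MetricSpace X] [MetricSpace Y] {R : Set (X × Y)}
    (hR : IsCorrespondence R) :
    hypConst X ≤ hypConst Y + 2 * corrDis R := by
  set D := corrDis R with hD
  have key : ∀ δ ∈ {δ : ℝ≥0∞ | ∀ x y w z : Y,
      edist x y + edist w z ≤ max (edist x w + edist y z) (edist x z + edist y w) + 2 * δ},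
      hypConst X ≤ δ + 2 * D := by
    intro δ hδ
    refine iInf₂_le_of_le (δ + 2 * D) ?_ le_rfl
    intro x y w z
    obtain ⟨x', hx⟩ := hR.1 x
    obtain ⟨y', hy⟩ := hR.1 y
    obtain ⟨w', hw⟩ := hR.1 w
    obtain ⟨z', hz⟩ := hR.1 z
    have h1 := (corrDis_bound (a := (x, x')) (b := (y, y')) hx hy).1
    have h2 := (corrDis_bound (a := (w, w')) (b := (z, z')) hw hz).1
    have h3 := (corrDis_bound (a := (x, x')) (b := (w, w')) hx hw).2
    have h4 := (corrDis_bound (a := (y, y')) (b := (z, z')) hy hz).2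
    have h5 := (corrDis_bound (a := (x, x')) (b := (z, z')) hx hz).2
    have h6 := (corrDis_bound (a := (y, y')) (b := (w, w')) hy hw).2
    have hY := hδ x' y' w' z'
    simp only at h1 h2 h3 h4 h5 h6
    have pair : ∀ a b : ℝ≥0∞, a + D + (b + D) = (a + b) + 2 * D := fun a b => by ring
    calc edist x y + edist w z
        ≤ (edist x' y' + D) + (edist w' z' + D) := add_le_add h1 h2
      _ = (edist x' y' + edist w' z') + 2 * D := pair _ _
      _ ≤ (max (edist x' w' + edist y' z') (edist x' z' + edist y' w') + 2 * δ) + 2 * D :=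
          add_le_add_left hY _
      _ ≤ (max ((edist x w + D) + (edist y z + D)) ((edist x z + D) + (edist y w + D))
            + 2 * δ) + 2 * D := by
          gcongr
      _ = max (edist x w + edist y z) (edist x z + edist y w) + 2 * (δ + 2 * D) := by
          rw [pair, pair, max_add_add_right]; ring
  have h1 : hypConst X ≤ ⨅ δ ∈ {δ : ℝ≥0∞ | ∀ x y w z : Y,
      edist x y + edist w z ≤ max (edist x w + edist y z) (edist x z + edist y w) + 2 * δ},
      (δ + 2 * D) := le_iInf₂ key
  refine h1.trans ?_
  rw [hypConst, iInf_subtype', iInf_subtype', ENNReal.iInf_add]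

lemma corrDis_swap_le {X Y : Type*} [MetricSpace X] [MetricSpace Y] (R : Set (X × Y)) :
    corrDis (Prod.swap ⁻¹' R : Set (Y × X)) ≤ corrDis R := by
  refine iSup₂_le fun a ha => iSup₂_le fun b hb => ?_
  have := corrDis_term_le (R := R) ha hb
  simpa [max_comm] using this

/-- `|hyp(X) - hyp(Y)| ≤ 4·d_GH(X,Y)`, stated as the two one-sided
inequalities in `ℝ≥0∞`. -/
theorem abs_hypConst_sub_le {X Y : Type*} [MetricSpace X] [MetricSpace Y] :
    hypConst X ≤ hypConst Y + 4 * ghDist X Y ∧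
    hypConst Y ≤ hypConst X + 4 * ghDist X Y := by
  have h42 : (4 : ℝ≥0∞) * 2⁻¹ = 2 := by
    rw [show (4:ℝ≥0∞) = 2*2 by norm_num, mul_assoc,
      ENNReal.mul_inv_cancel two_ne_zero ENNReal.ofNat_ne_top, mul_one]
  have h4 : (4 : ℝ≥0∞) * ghDist X Y
      = 2 * ⨅ R ∈ {R : Set (X × Y) | IsCorrespondence R}, corrDis R := by
    rw [ghDist, ← mul_assoc, h42]
  constructor
  · rw [h4]
    simp_rw [ENNReal.mul_iInf_of_ne two_ne_zero ENNReal.ofNat_ne_top, ENNReal.add_iInf]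
    exact le_iInf₂ fun R hR => hypConst_le_corr hR
  · rw [h4]
    simp_rw [ENNReal.mul_iInf_of_ne two_ne_zero ENNReal.ofNat_ne_top, ENNReal.add_iInf]
    refine le_iInf₂ fun R hR => ?_
    have hR' : IsCorrespondence (Prod.swap ⁻¹' R : Set (Y × X)) := by
      constructor
      · intro y; obtain ⟨x, hx⟩ := hR.2 y; exact ⟨x, hx⟩
      · intro x; obtain ⟨y, hy⟩ := hR.1 x; exact ⟨y, hy⟩
    calc hypConst Y ≤ hypConst X + 2 * corrDis (Prod.swap ⁻¹' R : Set (Y × X)) :=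
          hypConst_le_corr hR'
      _ ≤ hypConst X + 2 * corrDis R := by gcongr; exact corrDis_swap_le R
end

section
/- Let X and Y be geodesic metric spaces, R a correspondence between them, and r > dis(R)/2. Then R is a path subcorrespondence of its r-extension R_r: for any x R y, x' R y', any continuous path α from x to x' in X admits a continuous path β̃ from y to y' in Y with the same domain such that α(t) R_r β̃(t) for all t, and symmetrically for paths in Y. -/
open scoped ENNReal unitInterval

/-- A geodesic metric space: any two points are joined by a constant-speed
length-minimizing geodesic. -/
def IsGeodesicSpace (X : Type*) [MetricSpace X] : Prop :=
  ∀ x y : X, ∃ γ : Path x y, ∀ s t : unitInterval, dist (γ s) (γ t) = |(s : ℝ) - (t : ℝ)| * dist x y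

/-- The minimum of `d(p,·)` along a path. -/
noncomputable def pathMin {X : Type*} [MetricSpace X] (p : X) {x x' : X} (γ : Path x x') : ℝ :=
  sInf (Set.range fun t => dist p (γ t))

/-- `m_p(x,x')`: the supremum over continuous paths from `x` to `x'` of the minimum of
`d(p,·)` along the path. -/
noncomputable def mFn {X : Type*} [MetricSpace X] (p x x' : X) : ℝ :=
  sSup {m | ∃ γ : Path x x', m = pathMin p γ}

/-- The Gromov product `g_p(x,x') = (d(p,x) + d(p,x') - d(x,x'))/2`. -/
noncomputable def gromovProd {X : Type*} [MetricSpace X] (p x x' : X) : ℝ :=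
  (dist p x + dist p x' - dist x x') / 2

/-- The `r`-extension of a correspondence. -/
def corrExt {X Y : Type*} [MetricSpace X] [MetricSpace Y] (R : Set (X × Y)) (r : ℝ) :
    Set (X × Y) :=
  {a | ∃ b ∈ R, dist a.1 b.1 + dist a.2 b.2 ≤ r}

/-- `R₀` is a path subcorrespondence of `R`: `R₀ ⊆ R`, `R₀` is a correspondence, and for
related pairs `x R₀ y`, `x' R₀ y'`, every path from `x` to `x'` lifts to a path from `y`
to `y'` related pointwise under `R`, and symmetrically. -/
def IsPathSubcorr {X Y : Type*} [MetricSpace X] [MetricSpace Y]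
    (R R₀ : Set (X × Y)) : Prop :=
  R₀ ⊆ R ∧ IsCorrespondence R₀ ∧
  ∀ x x' : X, ∀ y y' : Y, (x, y) ∈ R₀ → (x', y') ∈ R₀ →
    (∀ α : Path x x', ∃ β : Path y y', ∀ t : unitInterval, (α t, β t) ∈ R) ∧
    (∀ β : Path y y', ∃ α : Path x x', ∀ t : unitInterval, (α t, β t) ∈ R)

noncomputable def pieceFn {Y : Type*} [TopologicalSpace Y] {ys : ℕ → Y} (n : ℕ)
    (γ : ∀ j : ℕ, Path (ys j) (ys (j+1))) (j : ℕ) (t : ℝ) : Y :=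
  γ j (Set.projIcc 0 1 zero_le_one ((n:ℝ) * t - (j:ℝ)))

noncomputable def glueAux {Y : Type*} [TopologicalSpace Y] {ys : ℕ → Y} (n : ℕ)
    (γ : ∀ j : ℕ, Path (ys j) (ys (j+1))) : ℕ → ℝ → Y
  | 0, t => pieceFn n γ 0 t
  | (k+1), t => if t ≤ ((k:ℝ)+1)/(n:ℝ) then glueAux n γ k t else pieceFn n γ (k+1) t

lemma proj_eq_one {z : ℝ} (h : 1 ≤ z) : Set.projIcc (0:ℝ) 1 zero_le_one z = 1 := by
  apply Subtype.ext
  rw [Set.coe_projIcc, min_eq_left h, max_eq_right zero_le_one]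
  rfl

lemma proj_eq_zero {z : ℝ} (h : z ≤ 0) : Set.projIcc (0:ℝ) 1 zero_le_one z = 0 := by
  apply Subtype.ext
  rw [Set.coe_projIcc, max_eq_left (min_le_of_right_le h)]
  rfl

lemma proj_coe {z : ℝ} (h0 : 0 ≤ z) (h1 : z ≤ 1) :
    ((Set.projIcc (0:ℝ) 1 zero_le_one z : unitInterval) : ℝ) = z := by
  rw [Set.coe_projIcc, min_eq_right h1, max_eq_right h0]

section Glue
variable {Y : Type*} [TopologicalSpace Y] {ys : ℕ → Y} {n : ℕ}
  (γ : ∀ j : ℕ, Path (ys j) (ys (j+1)))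

lemma pieceFn_cont (j : ℕ) : Continuous (pieceFn n γ j) :=
  (γ j).continuous.comp (continuous_projIcc.comp (by continuity))

lemma glueAux_of_ge (hn : (0:ℝ) < n) :
    ∀ k : ℕ, ∀ t : ℝ, ((k:ℝ)+1)/(n:ℝ) ≤ t → glueAux n γ k t = ys (k+1) := by
  intro k
  induction k with
  | zero =>
    intro t ht
    show pieceFn n γ 0 t = ys 1
    rw [div_le_iff₀ hn] at ht
    unfold pieceFn
    rw [show ((0:ℕ):ℝ) = 0 by norm_num, sub_zero, proj_eq_one (by nlinarith)]
    exact (γ 0).target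
  | succ k ih =>
    intro t ht
    push_cast at ht
    rw [div_le_iff₀ hn] at ht
    show (if t ≤ ((k:ℝ)+1)/(n:ℝ) then glueAux n γ k t else pieceFn n γ (k+1) t) = ys (k+2)
    rw [if_neg (by rw [not_le, div_lt_iff₀ hn]; linarith)]
    unfold pieceFn
    rw [show (((k+1:ℕ)):ℝ) = (k:ℝ)+1 by push_cast; ring, proj_eq_one (by linarith)]
    exact (γ (k+1)).target

lemma glueAux_eq (hn : (0:ℝ) < n) :
    ∀ k j : ℕ, j ≤ k → ∀ t : ℝ, (j:ℝ)/(n:ℝ) ≤ t → t ≤ ((j:ℝ)+1)/(n:ℝ) →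
      glueAux n γ k t = pieceFn n γ j t := by
  intro k
  induction k with
  | zero =>
    intro j hj t _ _
    interval_cases j
    rfl
  | succ k ih =>
    intro j hj t ht1 ht2
    show (if t ≤ ((k:ℝ)+1)/(n:ℝ) then glueAux n γ k t else pieceFn n γ (k+1) t) = pieceFn n γ j t
    rcases le_or_gt t (((k:ℝ)+1)/(n:ℝ)) with h | h
    · rw [if_pos h]
      rcases Nat.lt_or_ge j (k+1) with hjk | hjk
      · exact ih j (Nat.lt_succ_iff.mp hjk) t ht1 ht2
      · have hjeq : j = k + 1 := le_antisymm hj hjk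
        subst hjeq
        have hteq : t = ((k:ℝ)+1)/(n:ℝ) := by
          apply le_antisymm h
          calc ((k:ℝ)+1)/(n:ℝ) = (((k+1:ℕ)):ℝ)/(n:ℝ) := by push_cast; ring
            _ ≤ t := ht1
        rw [glueAux_of_ge γ hn k t hteq.ge]
        unfold pieceFn
        have hz : (n:ℝ) * t - ((k+1:ℕ):ℝ) = 0 := by
          rw [hteq]; push_cast; field_simp; ring
        rw [hz, proj_eq_zero le_rfl]
        exact ((γ (k+1)).source).symm
    · rw [if_neg (not_le.2 h)]
      have hjeq : j = k + 1 := by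
        by_contra hne
        have hjk : j ≤ k := Nat.lt_succ_iff.mp (lt_of_le_of_ne hj hne)
        have : t ≤ ((k:ℝ)+1)/(n:ℝ) := le_trans ht2 (by
          gcongr <;> exact_mod_cast Nat.succ_le_succ hjk)
        linarith
      subst hjeq
      rfl

lemma glueAux_cont (hn : (0:ℝ) < n) : ∀ k, Continuous (glueAux n γ k) := by
  intro k
  induction k with
  | zero => exact pieceFn_cont γ 0
  | succ k ih =>
    show Continuous fun t => if t ≤ ((k:ℝ)+1)/(n:ℝ) then glueAux n γ k t else pieceFn n γ (k+1) t
    apply Continuous.if_le ih (pieceFn_cont γ (k+1)) continuous_id continuous_const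
    intro t ht
    simp only [id_eq] at ht
    rw [glueAux_of_ge γ hn k t ht.ge]
    unfold pieceFn
    have hz : (n:ℝ) * t - ((k+1:ℕ):ℝ) = 0 := by rw [ht]; push_cast; field_simp; ring
    rw [hz, proj_eq_zero le_rfl]
    exact ((γ (k+1)).source).symm

end Glue

lemma lift_path {X Y : Type*} [MetricSpace X] [MetricSpace Y] (hY : IsGeodesicSpace Y)
    (R : Set (X × Y)) (hR2 : ∀ x : X, ∃ y : Y, (x, y) ∈ R) (D r : ℝ)
    (hD : ∀ a ∈ R, ∀ b ∈ R, dist a.2 b.2 ≤ dist a.1 b.1 + D)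
    (hD0 : 0 ≤ D) (hDr : D < 2*r)
    {x x' : X} {y y' : Y} (hxy : (x, y) ∈ R) (hxy' : (x', y') ∈ R) (α : Path x x') :
    ∃ β : Path y y', ∀ t : unitInterval,
      ∃ b ∈ R, dist (α t) b.1 + dist (β t) b.2 ≤ r := by
  set δ := (2*r - D)/3 with hδdef
  have hδ : 0 < δ := by rw [hδdef]; linarith
  have huc : UniformContinuous α := CompactSpace.uniformContinuous_of_continuous α.continuous
  obtain ⟨η, hη, hmod⟩ := Metric.uniformContinuous_iff.mp huc δ hδ
  obtain ⟨n, hn⟩ := exists_nat_gt (1/η)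
  have hnR : (0:ℝ) < n := lt_trans (by positivity) hn
  have hn0 : 0 < n := by exact_mod_cast hnR
  have hinv : 1/(n:ℝ) < η := by
    rw [div_lt_iff₀ hη] at hn
    rw [div_lt_iff₀ hnR]
    linarith [mul_comm η (n:ℝ)]
  set node : ℕ → unitInterval := fun j => Set.projIcc 0 1 zero_le_one ((j:ℝ)/(n:ℝ)) with hnodedef
  have hnode : ∀ j ≤ n, ((node j : unitInterval) : ℝ) = (j:ℝ)/(n:ℝ) := by
    intro j hj
    exact proj_coe (by positivity) ((div_le_one hnR).mpr (by exact_mod_cast hj))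
  set ys : ℕ → Y := fun j => if j = 0 then y else if n ≤ j then y'
    else Classical.choose (hR2 (α (node j))) with hysdef
  have hys : ∀ j ≤ n, (α (node j), ys j) ∈ R := by
    intro j hj
    by_cases h0 : j = 0
    · subst h0
      have h1 : node 0 = 0 := Subtype.ext (by rw [hnode 0 (Nat.zero_le n)]; simp)
      simp only [hysdef, if_pos rfl]
      rw [h1, α.source]
      exact hxy
    · by_cases hn' : n ≤ j
      · have hjn : j = n := le_antisymm hj hn'
        have h1 : node n = 1 := Subtype.ext (by rw [hnode n le_rfl]; field_simp; rfl)
        rw [hjn]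
        simp only [hysdef, if_neg (Nat.pos_iff_ne_zero.mp hn0), if_pos le_rfl]
        rw [h1, α.target]
        exact hxy'
      · simp only [hysdef, if_neg h0, if_neg hn']
        exact Classical.choose_spec (hR2 (α (node j)))
  have hys0 : ys 0 = y := by simp [hysdef]
  have hysn : ys n = y' := by simp [hysdef, Nat.pos_iff_ne_zero.mp hn0]
  set γ : ∀ j : ℕ, Path (ys j) (ys (j+1)) := fun j => (hY (ys j) (ys (j+1))).choose with hγdef
  have hγ : ∀ j : ℕ, ∀ s t : unitInterval,
      dist (γ j s) (γ j t) = |(s:ℝ) - (t:ℝ)| * dist (ys j) (ys (j+1)) :=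
    fun j => (hY (ys j) (ys (j+1))).choose_spec
  have hcastn : (((n-1:ℕ)):ℝ) = (n:ℝ) - 1 := by
    push_cast [Nat.cast_sub hn0]; ring
  have hsrc : glueAux n γ (n-1) ((0:unitInterval):ℝ) = y := by
    rw [show ((0:unitInterval):ℝ) = 0 by norm_num]
    rw [glueAux_eq γ hnR (n-1) 0 (Nat.zero_le _) 0 (by norm_num) (by positivity)]
    unfold pieceFn
    rw [show (n:ℝ) * 0 - ((0:ℕ):ℝ) = 0 by norm_num, proj_eq_zero le_rfl]
    rw [(γ 0).source, hys0]
  have htgt : glueAux n γ (n-1) ((1:unitInterval):ℝ) = y' := by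
    rw [show ((1:unitInterval):ℝ) = 1 by norm_num]
    rw [glueAux_eq γ hnR (n-1) (n-1) le_rfl 1
      (by rw [div_le_one hnR, hcastn]; linarith)
      (by rw [le_div_iff₀ hnR, hcastn]; linarith)]
    unfold pieceFn
    rw [show (n:ℝ) * 1 - ((n-1:ℕ):ℝ) = 1 by rw [hcastn]; ring, proj_eq_one le_rfl]
    rw [(γ (n-1)).target, Nat.sub_add_cancel hn0, hysn]
  refine ⟨⟨⟨fun t => glueAux n γ (n-1) (t:ℝ),
    (glueAux_cont γ hnR (n-1)).comp continuous_subtype_val⟩, hsrc, htgt⟩, ?_⟩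
  intro t
  set m : ℕ := ⌊(n:ℝ) * (t:ℝ)⌋.toNat with hmdef
  set j : ℕ := min (n-1) m with hjdef
  have hj_le : j ≤ n - 1 := min_le_left _ _
  have hjn : j + 1 ≤ n := by omega
  have hmfl : ((m:ℕ):ℝ) = (⌊(n:ℝ) * (t:ℝ)⌋ : ℝ) := by
    rw [hmdef]
    exact_mod_cast Int.toNat_of_nonneg (Int.floor_nonneg.2 (mul_nonneg hnR.le t.2.1))
  have ht1 : (j:ℝ)/(n:ℝ) ≤ (t:ℝ) := by
    rw [div_le_iff₀ hnR, mul_comm]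
    calc (j:ℝ) ≤ (m:ℝ) := Nat.cast_le.2 (min_le_right _ _)
      _ = (⌊(n:ℝ) * (t:ℝ)⌋ : ℝ) := hmfl
      _ ≤ (n:ℝ) * (t:ℝ) := Int.floor_le _
  have ht2 : (t:ℝ) ≤ ((j:ℝ)+1)/(n:ℝ) := by
    rw [le_div_iff₀ hnR, mul_comm ((t:ℝ)) ((n:ℝ))]
    rcases le_or_gt (n-1) m with hc | hc
    · have hj' : j = n - 1 := min_eq_left hc
      rw [hj', hcastn]
      have := t.2.2
      nlinarith
    · have hj' : j = m := min_eq_right hc.le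
      rw [hj']
      have := Int.lt_floor_add_one ((n:ℝ) * (t:ℝ))
      rw [← hmfl] at this
      linarith
  have hglue : glueAux n γ (n-1) (t:ℝ) = pieceFn n γ j (t:ℝ) :=
    glueAux_eq γ hnR (n-1) j hj_le (t:ℝ) ht1 ht2
  set s : unitInterval := Set.projIcc 0 1 zero_le_one ((n:ℝ) * (t:ℝ) - (j:ℝ)) with hsdef
  have hβt : glueAux n γ (n-1) (t:ℝ) = γ j s := hglue
  set L := dist (ys j) (ys (j+1)) with hLdef
  have hL0 : 0 ≤ L := dist_nonneg
  have hnear : ∀ i ≤ n, |(t:ℝ) - (i:ℝ)/(n:ℝ)| ≤ 1/(n:ℝ) → dist (α t) (α (node i)) < δ := by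
    intro i hi habs
    apply hmod
    rw [Subtype.dist_eq, Real.dist_eq, hnode i hi]
    exact lt_of_le_of_lt habs hinv
  have hdivadd : ((j:ℝ)+1)/(n:ℝ) = (j:ℝ)/(n:ℝ) + 1/(n:ℝ) := by ring
  have hd1 : dist (α t) (α (node j)) < δ := by
    apply hnear j (by omega)
    rw [abs_of_nonneg (by linarith)]
    linarith
  have hd2 : dist (α t) (α (node (j+1))) < δ := by
    apply hnear (j+1) hjn
    rw [show (((j+1:ℕ)):ℝ) = (j:ℝ)+1 by push_cast; ring, abs_of_nonpos (by linarith)]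
    linarith
  have hd3 : dist (α (node j)) (α (node (j+1))) < δ := by
    apply hmod
    rw [Subtype.dist_eq, Real.dist_eq, hnode j (by omega), hnode (j+1) hjn,
      show (((j+1:ℕ)):ℝ) = (j:ℝ)+1 by push_cast; ring, abs_of_nonpos (by linarith)]
    linarith
  have hLle : L ≤ dist (α (node j)) (α (node (j+1))) + D :=
    hD _ (hys j (by omega)) _ (hys (j+1) hjn)
  have e1 : dist (γ j s) (ys j) = (s:ℝ) * L := by
    calc dist (γ j s) (ys j) = dist (γ j s) (γ j 0) := by rw [(γ j).source]
      _ = |(s:ℝ) - ((0:unitInterval):ℝ)| * L := hγ j s 0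
      _ = (s:ℝ) * L := by norm_num [abs_of_nonneg s.2.1]
  have e2 : dist (γ j s) (ys (j+1)) = (1 - (s:ℝ)) * L := by
    calc dist (γ j s) (ys (j+1)) = dist (γ j s) (γ j 1) := by rw [(γ j).target]
      _ = |(s:ℝ) - ((1:unitInterval):ℝ)| * L := hγ j s 1
      _ = (1 - (s:ℝ)) * L := by
          rw [show ((1:unitInterval):ℝ) = 1 by norm_num, abs_of_nonpos (by linarith [s.2.2])]
          ring
  rcases le_total ((s:ℝ)) (1/2) with hhalf | hhalf
  · refine ⟨(α (node j), ys j), hys j (by omega), ?_⟩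
    show dist (α t) (α (node j)) + dist (glueAux n γ (n-1) (t:ℝ)) (ys j) ≤ r
    rw [hβt, e1]
    have hmul : (s:ℝ) * L ≤ (1/2) * L := mul_le_mul_of_nonneg_right hhalf hL0
    linarith
  · refine ⟨(α (node (j+1)), ys (j+1)), hys (j+1) hjn, ?_⟩
    show dist (α t) (α (node (j+1))) + dist (glueAux n γ (n-1) (t:ℝ)) (ys (j+1)) ≤ r
    rw [hβt, e2]
    have hmul : (1 - (s:ℝ)) * L ≤ (1/2) * L :=
      mul_le_mul_of_nonneg_right (by linarith) hL0
    linarith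

/-- if `r > dis(R)/2`, then `R` is a path subcorrespondence of its
`r`-extension `R_r`. -/
theorem isPathSubcorr_corrExt {X Y : Type*} [MetricSpace X] [MetricSpace Y]
    (hX : IsGeodesicSpace X) (hY : IsGeodesicSpace Y)
    (R : Set (X × Y)) (hR : IsCorrespondence R) (r : ℝ)
    (hr : corrDis R < 2 * ENNReal.ofReal r) :
    IsPathSubcorr (corrExt R r) R := by
  have hTop : corrDis R ≠ ⊤ := ne_top_of_lt hr
  have hrpos : 0 < r := by
    by_contra h
    push_neg at h
    rw [ENNReal.ofReal_eq_zero.mpr h, mul_zero] at hr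
    simp at hr
  set D := (corrDis R).toReal with hDdef
  have hD0 : 0 ≤ D := ENNReal.toReal_nonneg
  have hDr : D < 2 * r := by
    have h2 : (2 * ENNReal.ofReal r) ≠ ⊤ := ENNReal.mul_ne_top (by simp) ENNReal.ofReal_ne_top
    have h3 := (ENNReal.toReal_lt_toReal hTop h2).mpr hr
    rwa [ENNReal.toReal_mul, ENNReal.toReal_ofNat, ENNReal.toReal_ofReal hrpos.le] at h3
  have hedge : ∀ a ∈ R, ∀ b ∈ R,
      max (edist a.1 b.1 - edist a.2 b.2) (edist a.2 b.2 - edist a.1 b.1) ≤ corrDis R :=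
    fun a ha b hb => le_iSup₂_of_le a ha (le_iSup₂_of_le b hb le_rfl)
  have hDa : ∀ a ∈ R, ∀ b ∈ R, dist a.2 b.2 ≤ dist a.1 b.1 + D := by
    intro a ha b hb
    have h1 : edist a.2 b.2 ≤ edist a.1 b.1 + corrDis R :=
      tsub_le_iff_left.mp ((le_max_right _ _).trans (hedge a ha b hb))
    have h2 : (edist a.1 b.1 + corrDis R) ≠ ⊤ :=
      ENNReal.add_ne_top.mpr ⟨edist_ne_top _ _, hTop⟩
    have h3 := ENNReal.toReal_mono h2 h1
    rwa [ENNReal.toReal_add (edist_ne_top _ _) hTop, ← dist_edist, ← dist_edist] at h3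
  have hDb : ∀ a ∈ R, ∀ b ∈ R, dist a.1 b.1 ≤ dist a.2 b.2 + D := by
    intro a ha b hb
    have h1 : edist a.1 b.1 ≤ edist a.2 b.2 + corrDis R :=
      tsub_le_iff_left.mp ((le_max_left _ _).trans (hedge a ha b hb))
    have h2 : (edist a.2 b.2 + corrDis R) ≠ ⊤ :=
      ENNReal.add_ne_top.mpr ⟨edist_ne_top _ _, hTop⟩
    have h3 := ENNReal.toReal_mono h2 h1
    rwa [ENNReal.toReal_add (edist_ne_top _ _) hTop, ← dist_edist, ← dist_edist] at h3
  refine ⟨?_, hR, ?_⟩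
  · intro p hp
    exact ⟨p, hp, by simp [dist_self]; linarith⟩
  · intro x x' y y' hxy hxy'
    constructor
    · intro α
      obtain ⟨β, hβ⟩ := lift_path hY R hR.1 D r hDa hD0 hDr hxy hxy' α
      exact ⟨β, fun t => hβ t⟩
    · intro β
      set R' : Set (Y × X) := (fun p : Y × X => (p.2, p.1)) ⁻¹' R with hR'def
      have hR'2 : ∀ yy : Y, ∃ xx : X, (yy, xx) ∈ R' := fun yy => hR.2 yy
      have hDa' : ∀ a ∈ R', ∀ b ∈ R', dist a.2 b.2 ≤ dist a.1 b.1 + D :=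
        fun a ha b hb => hDb (a.2, a.1) ha (b.2, b.1) hb
      obtain ⟨β', hβ'⟩ := lift_path hX R' hR'2 D r hDa' hD0 hDr
        (show (y, x) ∈ R' from hxy) (show (y', x') ∈ R' from hxy') β
      refine ⟨β', fun t => ?_⟩
      obtain ⟨b, hb, hbd⟩ := hβ' t
      exact ⟨(b.2, b.1), hb, by dsimp; linarith⟩
end

section
/- Let X be a geodesic metric space. For 0 < r < s, the map on first homology H₁(VR^r(X)) → H₁(VR^s(X)) induced by the inclusion of open Vietoris-Rips complexes is surjective. -/
open scoped unitInterval

/-- Ordered 1-boundary map: `∂₁(x,x') = x' - x` extended linearly to 1-chains. -/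
noncomputable def bdry1 (X : Type*) : ((X × X) →₀ ℚ) →ₗ[ℚ] (X →₀ ℚ) :=
  Finsupp.lsum ℚ fun e => LinearMap.toSpanSingleton ℚ (X →₀ ℚ)
    (Finsupp.single e.2 1 - Finsupp.single e.1 1)

/-- Ordered 2-boundary map: `∂₂(x,y,z) = (y,z) - (x,z) + (x,y)` extended linearly. -/
noncomputable def bdry2 (X : Type*) : ((X × X × X) →₀ ℚ) →ₗ[ℚ] ((X × X) →₀ ℚ) :=
  Finsupp.lsum ℚ fun t => LinearMap.toSpanSingleton ℚ ((X × X) →₀ ℚ)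
    (Finsupp.single (t.2.1, t.2.2) 1 - Finsupp.single (t.1, t.2.2) 1
      + Finsupp.single (t.1, t.2.1) 1)

/-- Edges of the open Vietoris–Rips complex `VR^r(X)`. -/
def vrEdges (X : Type*) [MetricSpace X] (r : ℝ) : Set (X × X) :=
  {e | dist e.1 e.2 < r}

/-- (Ordered) triangles of the open Vietoris–Rips complex `VR^r(X)`:
finite subsets of diameter `< r`. -/
def vrTriangles (X : Type*) [MetricSpace X] (r : ℝ) : Set (X × X × X) :=
  {t | dist t.1 t.2.1 < r ∧ dist t.1 t.2.2 < r ∧ dist t.2.1 t.2.2 < r}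

/-! ### Auxiliary definitions and lemmas -/

/-- The midpoint of `x` and `y`, extracted from a geodesic. -/
noncomputable def midp {X : Type*} [MetricSpace X] (hX : IsGeodesicSpace X) (x y : X) : X :=
  (hX x y).choose ⟨1/2, by norm_num, by norm_num⟩

lemma dist_midp_left {X : Type*} [MetricSpace X] (hX : IsGeodesicSpace X) (x y : X) :
    dist x (midp hX x y) = dist x y / 2 := by
  have key := (hX x y).choose_spec 0 ⟨1/2, by norm_num, by norm_num⟩
  rw [(hX x y).choose.source] at key
  rw [midp, key]
  norm_num
  ring

lemma dist_midp_right {X : Type*} [MetricSpace X] (hX : IsGeodesicSpace X) (x y : X) :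
    dist (midp hX x y) y = dist x y / 2 := by
  have key := (hX x y).choose_spec ⟨1/2, by norm_num, by norm_num⟩ 1
  rw [(hX x y).choose.target] at key
  rw [midp, key]
  norm_num
  ring

/-- Subdivision: replace each edge `(x,y)` by `(x,m x y) + (m x y, y)`. -/
noncomputable def subdivMap {X : Type*} (m : X → X → X) :
    ((X × X) →₀ ℚ) →ₗ[ℚ] ((X × X) →₀ ℚ) :=
  Finsupp.lsum ℚ fun e => LinearMap.toSpanSingleton ℚ ((X × X) →₀ ℚ)
    (Finsupp.single (e.1, m e.1 e.2) 1 + Finsupp.single (m e.1 e.2, e.2) 1)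

/-- Fill: send each edge `(x,y)` to the triangle `(x, m x y, y)`. -/
noncomputable def fillMap {X : Type*} (m : X → X → X) :
    ((X × X) →₀ ℚ) →ₗ[ℚ] ((X × X × X) →₀ ℚ) :=
  Finsupp.lsum ℚ fun e => LinearMap.toSpanSingleton ℚ ((X × X × X) →₀ ℚ)
    (Finsupp.single (e.1, m e.1 e.2, e.2) 1)

lemma bdry1_single {X : Type*} (e : X × X) (q : ℚ) :
    bdry1 X (Finsupp.single e q) =
      q • (Finsupp.single e.2 1 - Finsupp.single e.1 (1:ℚ)) := by
  simp [bdry1, LinearMap.toSpanSingleton_apply]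

lemma bdry2_single {X : Type*} (t : X × X × X) (q : ℚ) :
    bdry2 X (Finsupp.single t q) =
      q • (Finsupp.single (t.2.1, t.2.2) (1:ℚ) - Finsupp.single (t.1, t.2.2) 1
        + Finsupp.single (t.1, t.2.1) 1) := by
  simp [bdry2, LinearMap.toSpanSingleton_apply]

lemma subdiv_single {X : Type*} (m : X → X → X) (e : X × X) (q : ℚ) :
    subdivMap m (Finsupp.single e q) =
      q • (Finsupp.single (e.1, m e.1 e.2) (1:ℚ) + Finsupp.single (m e.1 e.2, e.2) 1) := by
  simp [subdivMap, LinearMap.toSpanSingleton_apply]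

lemma fill_single {X : Type*} (m : X → X → X) (e : X × X) (q : ℚ) :
    fillMap m (Finsupp.single e q) = q • Finsupp.single (e.1, m e.1 e.2, e.2) (1:ℚ) := by
  simp [fillMap, LinearMap.toSpanSingleton_apply]

lemma bdry1_subdiv {X : Type*} (m : X → X → X) (c : (X × X) →₀ ℚ) :
    bdry1 X (subdivMap m c) = bdry1 X c := by
  have : (bdry1 X).comp (subdivMap m) = bdry1 X := by
    apply Finsupp.lhom_ext
    intro e q
    simp only [LinearMap.comp_apply, subdiv_single, map_smul, map_add, bdry1_single,
      smul_sub, smul_add, smul_smul, one_smul, Finsupp.smul_single', mul_one]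
    abel
  exact DFunLike.congr_fun this c

lemma bdry2_fill {X : Type*} (m : X → X → X) (c : (X × X) →₀ ℚ) :
    bdry2 X (fillMap m c) = subdivMap m c - c := by
  have : (bdry2 X).comp (fillMap m) = subdivMap m - LinearMap.id := by
    apply Finsupp.lhom_ext
    intro e q
    simp only [LinearMap.comp_apply, fill_single, map_smul, bdry2_single, subdiv_single,
      LinearMap.sub_apply, LinearMap.id_apply, smul_sub, smul_add, smul_smul, one_smul,
      Finsupp.smul_single', mul_one]
    abel
  have h := DFunLike.congr_fun this c
  simpa using h

lemma subdiv_mem {X : Type*} (m : X → X → X) (c : (X × X) →₀ ℚ) (a : X × X)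
    (ha : a ∈ (subdivMap m c).support) :
    ∃ e ∈ c.support, a = (e.1, m e.1 e.2) ∨ a = (m e.1 e.2, e.2) := by
  classical
  have hrw : subdivMap m c = c.sum fun e q =>
      q • (Finsupp.single (e.1, m e.1 e.2) (1:ℚ) + Finsupp.single (m e.1 e.2, e.2) 1) := by
    rw [subdivMap, Finsupp.lsum_apply]
    rfl
  rw [hrw] at ha
  have h := Finsupp.support_sum ha
  rw [Finset.mem_biUnion] at h
  obtain ⟨e, he, hae⟩ := h
  refine ⟨e, he, ?_⟩
  have h3 := Finsupp.support_add (Finsupp.support_smul hae)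
  rw [Finset.mem_union] at h3
  rcases h3 with h | h
  · exact Or.inl (Finset.mem_singleton.mp (Finsupp.support_single_subset h))
  · exact Or.inr (Finset.mem_singleton.mp (Finsupp.support_single_subset h))

lemma fill_mem {X : Type*} (m : X → X → X) (c : (X × X) →₀ ℚ) (a : X × X × X)
    (ha : a ∈ (fillMap m c).support) :
    ∃ e ∈ c.support, a = (e.1, m e.1 e.2, e.2) := by
  classical
  have hrw : fillMap m c = c.sum fun e q =>
      q • Finsupp.single (e.1, m e.1 e.2, e.2) (1:ℚ) := by
    rw [fillMap, Finsupp.lsum_apply]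
    rfl
  rw [hrw] at ha
  have h := Finsupp.support_sum ha
  rw [Finset.mem_biUnion] at h
  obtain ⟨e, he, hae⟩ := h
  exact ⟨e, he, Finset.mem_singleton.mp
    (Finsupp.support_single_subset (Finsupp.support_smul hae))⟩

lemma support_subdiv {X : Type*} [MetricSpace X] (hX : IsGeodesicSpace X) {t : ℝ}
    (c : (X × X) →₀ ℚ) (hc : ↑c.support ⊆ vrEdges X t) :
    ↑(subdivMap (midp hX) c).support ⊆ vrEdges X (t / 2) := by
  intro a ha
  obtain ⟨e, he, hae⟩ := subdiv_mem (midp hX) c a ha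
  have hed : dist e.1 e.2 < t := hc he
  rcases hae with rfl | rfl
  · show dist e.1 (midp hX e.1 e.2) < t / 2
    rw [dist_midp_left]; linarith
  · show dist (midp hX e.1 e.2) e.2 < t / 2
    rw [dist_midp_right]; linarith

lemma support_fill {X : Type*} [MetricSpace X] (hX : IsGeodesicSpace X) {t s : ℝ}
    (hs : 0 < s) (hts : t ≤ s) (c : (X × X) →₀ ℚ) (hc : ↑c.support ⊆ vrEdges X t) :
    ↑(fillMap (midp hX) c).support ⊆ vrTriangles X s := by
  intro a ha
  obtain ⟨e, he, rfl⟩ := fill_mem (midp hX) c a ha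
  have hed : dist e.1 e.2 < t := hc he
  refine ⟨?_, ?_, ?_⟩
  · show dist e.1 (midp hX e.1 e.2) < s
    rw [dist_midp_left]; linarith
  · show dist e.1 e.2 < s
    linarith
  · show dist (midp hX e.1 e.2) e.2 < s
    rw [dist_midp_right]; linarith

lemma subdivide_iter {X : Type*} [MetricSpace X] (hX : IsGeodesicSpace X) {s : ℝ}
    (hs : 0 < s) : ∀ n : ℕ, ∀ t : ℝ, t ≤ s → ∀ c : (X × X) →₀ ℚ,
    ↑c.support ⊆ vrEdges X t →
    ∃ c' : (X × X) →₀ ℚ, ↑c'.support ⊆ vrEdges X (t / 2 ^ n) ∧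
      bdry1 X c' = bdry1 X c ∧
      ∃ z : (X × X × X) →₀ ℚ, ↑z.support ⊆ vrTriangles X s ∧ bdry2 X z = c' - c := by
  classical
  intro n
  induction n with
  | zero =>
      intro t _ c hc
      exact ⟨c, by simpa using hc, rfl, 0, by simp, by simp⟩
  | succ n ih =>
      intro t hts c hc
      set c₁ := subdivMap (midp hX) c with hc₁
      have hsup₁ : ↑c₁.support ⊆ vrEdges X (t / 2) := support_subdiv hX c hc
      obtain ⟨c', hc'sup, hc'b, z₂, hz₂sup, hz₂b⟩ :=
        ih (t / 2) (by linarith) c₁ hsup₁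
      refine ⟨c', ?_, ?_, z₂ + fillMap (midp hX) c, ?_, ?_⟩
      · have : t / 2 / 2 ^ n = t / 2 ^ (n + 1) := by
          rw [div_div, pow_succ]; ring_nf
        rwa [this] at hc'sup
      · rw [hc'b, hc₁, bdry1_subdiv]
      · intro a ha
        rcases Finset.mem_union.mp (Finsupp.support_add ha) with h | h
        · exact hz₂sup h
        · exact support_fill hX hs hts c hc h
      · rw [map_add, hz₂b, bdry2_fill, ← hc₁]
        abel

/-- for a geodesic space `X` and `0 < r < s`, the map
`H₁(VR^r(X)) → H₁(VR^s(X))` induced by inclusion is surjective: every 1-cycle of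
`VR^s(X)` is homologous within `VR^s(X)` to a 1-cycle of `VR^r(X)`. -/
theorem vr_H1_map_surjective {X : Type*} [MetricSpace X] (hX : IsGeodesicSpace X)
    {r s : ℝ} (hr : 0 < r) (hrs : r < s) :
    ∀ c : (X × X) →₀ ℚ, ↑c.support ⊆ vrEdges X s → bdry1 X c = 0 →
      ∃ c' : (X × X) →₀ ℚ, (↑c'.support ⊆ vrEdges X r ∧ bdry1 X c' = 0) ∧
        ∃ z : (X × X × X) →₀ ℚ, ↑z.support ⊆ vrTriangles X s ∧ bdry2 X z = c - c' := by
  intro c hc hcyc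
  have hs : 0 < s := lt_trans hr hrs
  obtain ⟨n, hn⟩ := pow_unbounded_of_one_lt (s / r) (by norm_num : (1:ℝ) < 2)
  have hsn : s / 2 ^ n < r := by
    rw [div_lt_iff₀ hr] at hn
    rw [div_lt_iff₀ (by positivity : (0:ℝ) < 2 ^ n)]
    linarith
  obtain ⟨c', hc'sup, hc'b, z, hzsup, hzb⟩ := subdivide_iter hX hs n s le_rfl c hc
  refine ⟨c', ⟨?_, by rw [hc'b, hcyc]⟩, -z, ?_, ?_⟩
  · exact hc'sup.trans fun a (ha : dist a.1 a.2 < s / 2 ^ n) => lt_trans ha hsn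
  · simpa [Finsupp.support_neg] using hzsup
  · rw [map_neg, hzb]; abel
end
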